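/- (Lemma S1, general sufficient condition for δ-perfect learning.) Let ε > 0, ε̄ ∈ (0,1), ρ > 0, ρ̄ > 0, and J ≥ 1. Let f_1, …, f_J : ℕ → ℝ be functions with f_1(n) ≥ f_2(n) ≥ ⋯ ≥ f_J(n) ≥ 1 for all n, each monotone nondecreasing in n. For each n let k_1^n, …, k_n^n be natural numbers with k_i^n ≥ 1, and let b_n^1, …, b_n^J ∈ [0,1] with b_n^1 + ⋯ + b_n^J ≤ 1 satisfy: |{i ≤ n : k_i^n ≥ f_1(n)}|/n ≥ b_n^1, and for each j ∈ {2,…,J}, |{i ≤ n : f_{j−1}(n) > k_i^n ≥ f_j(n)}|/n ≥ b_n^j. Suppose (a) lim_{n→∞} ∑_{j=1}^J b_n^j = 1, and (b) for each j ∈ {1,…,J}, lim_{n→∞} b_n^j·(1 − erf(ε·√((ρ + ρ̄·f_j(n))/2))) = 0. Then there exists a sequence (δ_n) of nonnegative reals with δ_n → 0 such that for every n, (1/n)·∑_{i=1}^n erf(ε·√((ρ + ρ̄·k_i^n)/2)) ≥ 1 − δ_n·ε̄; hence δ-perfect learning occurs. -/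

import Mathlib

open Filter
open scoped Classical

/-- The error function `erf x = (2/√π) ∫₀ˣ e^{-t²} dt`. -/
noncomputable def erf (x : ℝ) : ℝ :=
  (2 / Real.sqrt Real.pi) * ∫ t in (0:ℝ)..x, Real.exp (-t ^ 2)

/-!
An agent whose signal count lies in band `j`, i.e. in `[f_j(n), f_{j-1}(n))`, has accuracy at
least `erf(ε√((ρ + ρ̄ f_j(n))/2))` because `erf` is increasing. The bands are disjoint, so the
average accuracy is at least `∑_j b_n^j erf(ε√((ρ + ρ̄ f_j(n))/2))
= ∑_j b_n^j - ∑_j b_n^j (1 - erf(ε√((ρ + ρ̄ f_j(n))/2)))`, which tends to `1` by (a) and (b).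
Take `δ_n` to be the positive part of the deficit divided by `ε̄`.
-/

open Finset
open scoped Topology

lemma erf_mono : Monotone erf := by
  intro x y hxy
  have hint : ∀ a b : ℝ,
      IntervalIntegrable (fun t : ℝ => Real.exp (-t ^ 2)) MeasureTheory.volume a b := fun a b =>
    (by fun_prop : Continuous fun t : ℝ => Real.exp (-t ^ 2)).intervalIntegrable a b
  have hxy_int : 0 ≤ ∫ t in x..y, Real.exp (-t ^ 2) :=
    intervalIntegral.integral_nonneg hxy fun t _ => (Real.exp_pos _).le
  unfold erf
  gcongr
  rw [← intervalIntegral.integral_add_adjacent_intervals (hint 0 x) (hint x y)]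
  linarith

lemma erf_nonneg {x : ℝ} (hx : 0 ≤ x) : 0 ≤ erf x := by
  simpa [erf] using erf_mono hx

/-- The probability that a Gaussian posterior of precision `ρ + ρbar * t` lies within `ε` of the
truth, `t` being the number of private signals. -/
noncomputable def accuracy (ε ρ ρbar t : ℝ) : ℝ :=
  erf (ε * Real.sqrt ((ρ + ρbar * t) / 2))

lemma accuracy_nonneg {ε : ℝ} (hε : 0 ≤ ε) (ρ ρbar t : ℝ) : 0 ≤ accuracy ε ρ ρbar t :=
  erf_nonneg (mul_nonneg hε (Real.sqrt_nonneg _))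

lemma accuracy_mono {ε ρbar : ℝ} (hε : 0 ≤ ε) (hρbar : 0 ≤ ρbar) (ρ : ℝ) :
    Monotone (accuracy ε ρ ρbar) := fun s t hst =>
  erf_mono <| by gcongr

section Bands

variable {ι : Type*} [Fintype ι] (c : ℕ → ℝ) (x : ι → ℝ)

/-- Band `0` is `[c 0, ∞)` and band `j + 1` is `[c (j + 1), c j)`. -/
noncomputable def band (j : ℕ) : Finset ι :=
  if j = 0 then univ.filter fun i => c 0 ≤ x i
  else univ.filter fun i => x i < c (j - 1) ∧ c j ≤ x i

variable {c x}

lemma le_of_mem_band {i : ι} {j : ℕ} (hi : i ∈ band c x j) : c j ≤ x i := by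
  unfold band at hi
  split_ifs at hi with hj
  · subst hj; exact (mem_filter.mp hi).2
  · exact (mem_filter.mp hi).2.2

lemma lt_of_mem_band {i : ι} {j : ℕ} (hj : j ≠ 0) (hi : i ∈ band c x j) : x i < c (j - 1) := by
  unfold band at hi
  rw [if_neg hj] at hi
  exact (mem_filter.mp hi).2.1

lemma pairwiseDisjoint_band {J : ℕ} (hc : ∀ j, j + 1 < J → c (j + 1) ≤ c j) :
    (↑(range J) : Set ℕ).PairwiseDisjoint (band c x) := by
  have hanti : AntitoneOn c (Set.Iio J) :=
    antitoneOn_of_add_one_le Set.ordConnected_Iio fun j _ _ hj => hc j hj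
  have key : ∀ j₁ j₂, j₁ < j₂ → j₂ < J → Disjoint (band c x j₁) (band c x j₂) := by
    intro j₁ j₂ hlt hj₂
    refine disjoint_left.mpr fun i hi₁ hi₂ => ?_
    have : c (j₂ - 1) ≤ c j₁ := hanti (by simp; omega) (by simp; omega) (by omega)
    linarith [le_of_mem_band hi₁, lt_of_mem_band (by omega) hi₂]
  intro j₁ hj₁ j₂ hj₂ hne
  simp only [coe_range, Set.mem_Iio] at hj₁ hj₂
  rcases hne.lt_or_gt with h | h
  exacts [key j₁ j₂ h hj₂, (key j₂ j₁ h hj₁).symm]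

lemma sum_card_band_mul_le {J : ℕ} (hc : ∀ j, j + 1 < J → c (j + 1) ≤ c j) {φ : ℝ → ℝ}
    (hφ : Monotone φ) (hφ₀ : ∀ t, 0 ≤ φ t) :
    ∑ j ∈ range J, ((band c x j).card : ℝ) * φ (c j) ≤ ∑ i, φ (x i) :=
  calc ∑ j ∈ range J, ((band c x j).card : ℝ) * φ (c j)
      ≤ ∑ j ∈ range J, ∑ i ∈ band c x j, φ (x i) := by
        gcongr with j
        simpa [nsmul_eq_mul] using
          card_nsmul_le_sum _ _ _ fun i hi => hφ (le_of_mem_band hi)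
    _ = ∑ i ∈ (range J).biUnion (band c x), φ (x i) :=
        (sum_biUnion (pairwiseDisjoint_band hc)).symm
    _ ≤ ∑ i, φ (x i) := sum_le_sum_of_subset_of_nonneg (subset_univ _) fun i _ _ => hφ₀ _

lemma sum_mul_le_average_of_le_card_band {n J : ℕ} (hn : 1 ≤ n) {x : Fin n → ℝ}
    (hc : ∀ j, j + 1 < J → c (j + 1) ≤ c j) {φ : ℝ → ℝ} (hφ : Monotone φ) (hφ₀ : ∀ t, 0 ≤ φ t)
    {b : ℕ → ℝ} (hb : ∀ j < J, b j ≤ ((band c x j).card : ℝ) / n) :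
    ∑ j ∈ range J, b j * φ (c j) ≤ (1 / n : ℝ) * ∑ i, φ (x i) := by
  have hn₀ : (0 : ℝ) < n := by exact_mod_cast hn
  rw [one_div, ← div_eq_inv_mul, le_div_iff₀ hn₀, sum_mul]
  refine le_trans (sum_le_sum fun j hj => ?_) (sum_card_band_mul_le hc hφ hφ₀)
  rw [mul_right_comm]
  exact mul_le_mul_of_nonneg_right ((le_div_iff₀ hn₀).mp (hb j (mem_range.mp hj))) (hφ₀ _)

end Bands

lemma exists_nonneg_tendsto_zero_mul_ge {u : ℕ → ℝ} (hu : Tendsto u atTop (𝓝 0)) {η : ℝ}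
    (hη : 0 < η) : ∃ δ : ℕ → ℝ, (∀ n, 0 ≤ δ n) ∧ Tendsto δ atTop (𝓝 0) ∧ ∀ n, u n ≤ δ n * η := by
  refine ⟨fun n => max 0 (u n / η), fun n => le_max_left _ _, ?_, fun n => ?_⟩
  · have := (tendsto_const_nhds (x := (0 : ℝ))).max (hu.div_const η)
    simpa using this
  · rw [← div_le_iff₀ hη]
    exact le_max_right _ _

theorem stmt_12_general (ε εbar ρ ρbar : ℝ) (hε : 0 < ε) (hεbar : εbar ∈ Set.Ioo (0:ℝ) 1)
    (hρbar : 0 < ρbar)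
    (J : ℕ)
    (f : ℕ → ℕ → ℝ)
    (hf_ord : ∀ n : ℕ, ∀ j : ℕ, j + 1 < J → f (j + 1) n ≤ f j n)
    (k : (n : ℕ) → Fin n → ℕ)
    (b : ℕ → ℕ → ℝ)
    (hfrac0 : ∀ n : ℕ, 1 ≤ n →
      b n 0 ≤ ((Finset.univ.filter fun i : Fin n => f 0 n ≤ (k n i : ℝ)).card : ℝ) / n)
    (hfracj : ∀ n : ℕ, 1 ≤ n → ∀ j : ℕ, 1 ≤ j → j < J →
      b n j ≤ ((Finset.univ.filter fun i : Fin n =>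
          (k n i : ℝ) < f (j - 1) n ∧ f j n ≤ (k n i : ℝ)).card : ℝ) / n)
    (ha : Tendsto (fun n => ∑ j ∈ Finset.range J, b n j) atTop (nhds 1))
    (hbvanish : ∀ j < J, Tendsto (fun n => b n j *
        (1 - erf (ε * Real.sqrt ((ρ + ρbar * f j n) / 2)))) atTop (nhds 0)) :
    ∃ δ : ℕ → ℝ, (∀ n, 0 ≤ δ n) ∧ Tendsto δ atTop (nhds 0) ∧
      ∀ n : ℕ, 1 ≤ n →
        1 - δ n * εbar ≤
          (1 / n : ℝ) * ∑ i : Fin n, erf (ε * Real.sqrt ((ρ + ρbar * k n i) / 2)) := by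
  have hdeficit : Tendsto (fun n => 1 - ∑ j ∈ range J, b n j * accuracy ε ρ ρbar (f j n))
      atTop (𝓝 0) := by
    have hmiss := tendsto_finsetSum (range J) fun j hj => hbvanish j (mem_range.mp hj)
    simp only [mul_sub, mul_one, sum_sub_distrib, sum_const_zero] at hmiss
    simpa [accuracy] using (ha.sub hmiss).const_sub 1
  obtain ⟨δ, hδ₀, hδ, hdeficit_le⟩ := exists_nonneg_tendsto_zero_mul_ge hdeficit hεbar.1
  refine ⟨δ, hδ₀, hδ, fun n hn => ?_⟩
  have hb : ∀ j < J, b n j ≤ ((band (f · n) (fun i => (k n i : ℝ)) j).card : ℝ) / n := by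
    rintro (_ | j) hj
    · simpa [band] using hfrac0 n hn
    · simpa [band] using hfracj n hn (j + 1) (by omega) hj
  have := sum_mul_le_average_of_le_card_band hn (hf_ord n) (accuracy_mono hε.le hρbar.le ρ)
    (accuracy_nonneg hε.le ρ ρbar) hb
  exact (sub_le_comm.mp (hdeficit_le n)).trans this

/-- Lemma S1: general sufficient condition for δ-perfect learning.
Given cutoff functions `f 0 ≥ f 1 ≥ … ≥ f (J-1) ≥ 1` (each nondecreasing in `n`)
and lower bounds `b n j` on the fraction of agents with `k` in the band
`[f j n, f (j-1) n)` (resp. `[f 0 n, ∞)` for `j = 0`), if the `b n j` sum to `1`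
in the limit and `b n j (1 - erf(ε√((ρ + ρ̄ f j n)/2))) → 0` for each `j < J`,
then there is a vanishing nonnegative sequence `δ_n` for which the sufficient
condition `(1/n) ∑ᵢ erf(ε√((ρ + ρ̄ kᵢⁿ)/2)) ≥ 1 - δ_n ε̄` for
`(ε, ε̄, δ_n)`-learning holds for every `n ≥ 1`; hence δ-perfect learning occurs. -/
theorem stmt_12 (ε εbar ρ ρbar : ℝ) (hε : 0 < ε) (hεbar : εbar ∈ Set.Ioo (0:ℝ) 1)
    (hρ : 0 < ρ) (hρbar : 0 < ρbar)
    (J : ℕ) (hJ : 1 ≤ J)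
    (f : ℕ → ℕ → ℝ)
    (hf_mono : ∀ j < J, Monotone (f j))
    (hf_ord : ∀ n : ℕ, ∀ j : ℕ, j + 1 < J → f (j + 1) n ≤ f j n)
    (hf_one : ∀ n : ℕ, ∀ j < J, 1 ≤ f j n)
    (k : (n : ℕ) → Fin n → ℕ) (hk : ∀ n i, 1 ≤ k n i)
    (b : ℕ → ℕ → ℝ)
    (hb01 : ∀ n : ℕ, ∀ j < J, b n j ∈ Set.Icc (0:ℝ) 1)
    (hbsum : ∀ n : ℕ, ∑ j ∈ Finset.range J, b n j ≤ 1)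
    (hfrac0 : ∀ n : ℕ, 1 ≤ n →
      b n 0 ≤ ((Finset.univ.filter fun i : Fin n => f 0 n ≤ (k n i : ℝ)).card : ℝ) / n)
    (hfracj : ∀ n : ℕ, 1 ≤ n → ∀ j : ℕ, 1 ≤ j → j < J →
      b n j ≤ ((Finset.univ.filter fun i : Fin n =>
          (k n i : ℝ) < f (j - 1) n ∧ f j n ≤ (k n i : ℝ)).card : ℝ) / n)
    (ha : Tendsto (fun n => ∑ j ∈ Finset.range J, b n j) atTop (nhds 1))
    (hbvanish : ∀ j < J, Tendsto (fun n => b n j *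
        (1 - erf (ε * Real.sqrt ((ρ + ρbar * f j n) / 2)))) atTop (nhds 0)) :
    ∃ δ : ℕ → ℝ, (∀ n, 0 ≤ δ n) ∧ Tendsto δ atTop (nhds 0) ∧
      ∀ n : ℕ, 1 ≤ n →
        1 - δ n * εbar ≤
          (1 / n : ℝ) * ∑ i : Fin n, erf (ε * Real.sqrt ((ρ + ρbar * k n i) / 2)) :=
  stmt_12_general ε εbar ρ ρbar hε hεbar hρbar J f hf_ord k b hfrac0 hfracj ha hbvanish
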